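/- arXiv:1809.06704 — 5 statements merged into one kernel-verified Lean document; each statement's English description precedes it below -/
import Mathlib

section
/- Let ρ > 0 and suppose x satisfies v(x) = 0 and Δl(d*(ρ,x);ρ,x) = 0, where d*(ρ,x) minimizes l(·;ρ,x) over the trust region X = {d : ‖d‖ ≤ δ}, δ > 0. Then x is a KKT point for the nonlinear program min f(x) s.t. c_i(x)=0 (i∈E), c_i(x)≤0 (i∈I), with Lagrange multipliers λ_i/ρ for some λ_i ∈ ∂v_i(c_i(x)). -/
/-! Since `v(x) = 0`, the point `x` is feasible and `l(0) = 0`, so `0` minimizes `l` over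
the trust region. Along each ray, `l(t • d) = l(0) + t · l'(0; d)` for small `t > 0`, hence
the directional derivative `l'(0; d) = ρ⟨∇f, d⟩ + ∑ v_i'(c_i; ⟨∇c_i, d⟩)` is nonnegative.
Each `v_i'(c_i; ·)` is the support function of `∂v_i(c_i)`, so `-ρ∇f` is dominated in every
direction by the compact convex set `{∑ λ_i ∇c_i : λ_i ∈ ∂v_i(c_i)}`, and Hahn–Banach puts it
in that set. -/

open Finset

/-- Clarke subdifferential of `|·|` at `z`. -/
noncomputable def subAbs (z : ℝ) : Set ℝ :=
  if 0 < z then {1} else if z < 0 then {-1} else Set.Icc (-1) 1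

/-- Clarke subdifferential of `max(·,0)` at `z`. -/
noncomputable def subPos (z : ℝ) : Set ℝ :=
  if 0 < z then {1} else if z < 0 then {0} else Set.Icc 0 1

open Filter Topology
open scoped RealInnerProductSpace

theorem isCompact_subAbs (z : ℝ) : IsCompact (subAbs z) := by
  unfold subAbs; split_ifs <;> first | exact isCompact_singleton | exact isCompact_Icc

theorem convex_subAbs (z : ℝ) : Convex ℝ (subAbs z) := by
  unfold subAbs; split_ifs <;> first | exact convex_singleton _ | exact convex_Icc _ _

theorem isCompact_subPos (z : ℝ) : IsCompact (subPos z) := by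
  unfold subPos; split_ifs <;> first | exact isCompact_singleton | exact isCompact_Icc

theorem convex_subPos (z : ℝ) : Convex ℝ (subPos z) := by
  unfold subPos; split_ifs <;> first | exact convex_singleton _ | exact convex_Icc _ _

theorem nonneg_of_mem_subPos {z μ : ℝ} (hμ : μ ∈ subPos z) : 0 ≤ μ := by
  unfold subPos at hμ
  split_ifs at hμ
  · rw [Set.mem_singleton_iff.1 hμ]; exact zero_le_one
  · exact (Set.mem_singleton_iff.1 hμ).ge
  · exact hμ.1

theorem mul_eq_zero_of_mem_subPos {z μ : ℝ} (hz : z ≤ 0) (hμ : μ ∈ subPos z) : μ * z = 0 := by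
  rcases hz.lt_or_eq with hz | rfl
  · rw [subPos, if_neg hz.not_gt, if_pos hz, Set.mem_singleton_iff] at hμ
    rw [hμ, zero_mul]
  · exact mul_zero μ

noncomputable def absDir (z s : ℝ) : ℝ :=
  if 0 < z then s else if z < 0 then -s else |s|

noncomputable def posDir (z s : ℝ) : ℝ :=
  if 0 < z then s else if z < 0 then 0 else max s 0

theorem exists_mem_subAbs_mul_eq_absDir (z s : ℝ) : ∃ μ ∈ subAbs z, μ * s = absDir z s := by
  unfold subAbs absDir
  split_ifs
  · exact ⟨1, rfl, one_mul s⟩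
  · exact ⟨-1, rfl, neg_one_mul s⟩
  · rcases le_or_gt 0 s with hs | hs
    · exact ⟨1, by norm_num, by rw [one_mul, abs_of_nonneg hs]⟩
    · exact ⟨-1, by norm_num, by rw [neg_one_mul, abs_of_neg hs]⟩

theorem exists_mem_subPos_mul_eq_posDir (z s : ℝ) : ∃ μ ∈ subPos z, μ * s = posDir z s := by
  unfold subPos posDir
  split_ifs
  · exact ⟨1, rfl, one_mul s⟩
  · exact ⟨0, rfl, zero_mul s⟩
  · rcases le_or_gt 0 s with hs | hs
    · exact ⟨1, by norm_num, by rw [one_mul, max_eq_left hs]⟩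
    · exact ⟨0, by norm_num, by rw [zero_mul, max_eq_right hs.le]⟩

theorem tendsto_add_mul_nhdsGT_zero (z s : ℝ) :
    Tendsto (fun t => z + t * s) (𝓝[>] 0) (𝓝 z) := by
  have hcont : Continuous fun t : ℝ => z + t * s := by fun_prop
  exact (hcont.tendsto' 0 z (by simp)).mono_left nhdsWithin_le_nhds

theorem eventually_abs_add_mul_eq (z s : ℝ) :
    ∀ᶠ t in 𝓝[>] 0, |z + t * s| = |z| + t * absDir z s := by
  unfold absDir
  split_ifs with hpos hneg
  · filter_upwards [(tendsto_add_mul_nhdsGT_zero z s).eventually (lt_mem_nhds hpos)] with t ht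
    rw [abs_of_pos ht, abs_of_pos hpos]
  · filter_upwards [(tendsto_add_mul_nhdsGT_zero z s).eventually (gt_mem_nhds hneg)] with t ht
    rw [abs_of_neg ht, abs_of_neg hneg]
    ring
  · obtain rfl : z = 0 := by linarith [not_lt.1 hpos, not_lt.1 hneg]
    filter_upwards [self_mem_nhdsWithin] with t (ht : 0 < t)
    rw [zero_add, abs_zero, zero_add, abs_mul, abs_of_pos ht]

theorem eventually_max_add_mul_eq (z s : ℝ) :
    ∀ᶠ t in 𝓝[>] 0, max (z + t * s) 0 = max z 0 + t * posDir z s := by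
  unfold posDir
  split_ifs with hpos hneg
  · filter_upwards [(tendsto_add_mul_nhdsGT_zero z s).eventually (lt_mem_nhds hpos)] with t ht
    rw [max_eq_left ht.le, max_eq_left hpos.le]
  · filter_upwards [(tendsto_add_mul_nhdsGT_zero z s).eventually (gt_mem_nhds hneg)] with t ht
    rw [max_eq_right ht.le, max_eq_right hneg.le]
    ring
  · obtain rfl : z = 0 := by linarith [not_lt.1 hpos, not_lt.1 hneg]
    filter_upwards [self_mem_nhdsWithin] with t (ht : 0 < t)
    rw [zero_add, max_self, zero_add, mul_max_of_nonneg _ _ ht.le, mul_zero]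

section Penalty

variable {ι : Type*} (E I : Finset ι)

/-- The constraint violation `v` of the paper, as a function of the constraint values
`z = c(x)`. -/
noncomputable def penalty (z : ι → ℝ) : ℝ :=
  ∑ i ∈ E, |z i| + ∑ i ∈ I, max (z i) 0

noncomputable def penaltyDir (z s : ι → ℝ) : ℝ :=
  ∑ i ∈ E, absDir (z i) (s i) + ∑ i ∈ I, posDir (z i) (s i)

variable {E I}

theorem penalty_eq_zero_iff {z : ι → ℝ} :
    penalty E I z = 0 ↔ (∀ i ∈ E, z i = 0) ∧ ∀ i ∈ I, z i ≤ 0 := by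
  rw [penalty, add_eq_zero_iff_of_nonneg (sum_nonneg fun i _ => abs_nonneg _)
      (sum_nonneg fun i _ => le_max_right _ _),
    sum_eq_zero_iff_of_nonneg fun i _ => abs_nonneg _,
    sum_eq_zero_iff_of_nonneg fun i _ => le_max_right _ _]
  simp only [abs_eq_zero, max_eq_right_iff]

theorem eventually_penalty_add_mul_eq (z s : ι → ℝ) :
    ∀ᶠ t in 𝓝[>] 0,
      penalty E I (fun i => z i + t * s i) = penalty E I z + t * penaltyDir E I z s := by
  filter_upwards [(eventually_all_finset E).2 fun i _ => eventually_abs_add_mul_eq (z i) (s i),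
    (eventually_all_finset I).2 fun i _ => eventually_max_add_mul_eq (z i) (s i)] with t hE hI
  rw [penalty, penalty, penaltyDir, sum_congr rfl hE, sum_congr rfl hI, sum_add_distrib,
    sum_add_distrib, ← mul_sum, ← mul_sum]
  ring

end Penalty

section Separation

variable {V : Type*} [NormedAddCommGroup V] [InnerProductSpace ℝ V] [CompleteSpace V]

theorem Convex.mem_of_forall_exists_inner_le {K : Set V} (hK : Convex ℝ K) (hKc : IsClosed K)
    {v : V} (h : ∀ w, ∃ k ∈ K, ⟪w, v⟫ ≤ ⟪w, k⟫) : v ∈ K := by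
  by_contra hv
  obtain ⟨F, u, hK, hv⟩ := geometric_hahn_banach_closed_point hK hKc hv
  obtain ⟨k, hk, hle⟩ := h ((InnerProductSpace.toDual ℝ V).symm F)
  rw [InnerProductSpace.toDual_symm_apply, InnerProductSpace.toDual_symm_apply] at hle
  linarith [hK k hk]

theorem exists_sum_smul_eq_of_forall_inner_le {ι : Type*} (A : Finset ι) (a : ι → V)
    {T : ι → Set ℝ} (hTc : ∀ i, IsCompact (T i)) (hTv : ∀ i, Convex ℝ (T i)) {v : V}
    (h : ∀ w, ∃ μ : ι → ℝ, (∀ i, μ i ∈ T i) ∧ ⟪w, v⟫ ≤ ⟪w, ∑ i ∈ A, μ i • a i⟫) :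
    ∃ μ : ι → ℝ, (∀ i, μ i ∈ T i) ∧ ∑ i ∈ A, μ i • a i = v := by
  let Φ : (ι → ℝ) →L[ℝ] V := ∑ i ∈ A, (ContinuousLinearMap.proj i).smulRight (a i)
  have hΦ : ∀ μ, Φ μ = ∑ i ∈ A, μ i • a i := fun μ => by simp [Φ]
  have hK : Convex ℝ (Φ '' Set.univ.pi T) :=
    (convex_pi fun i _ => hTv i).linear_image Φ.toLinearMap
  have hKc : IsClosed (Φ '' Set.univ.pi T) :=
    ((isCompact_univ_pi hTc).image Φ.continuous).isClosed
  obtain ⟨μ, hμ, rfl⟩ := hK.mem_of_forall_exists_inner_le hKc fun w => by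
    obtain ⟨μ, hμ, hle⟩ := h w
    exact ⟨Φ μ, ⟨μ, Set.mem_univ_pi.2 hμ, rfl⟩, hΦ μ ▸ hle⟩
  exact ⟨μ, Set.mem_univ_pi.1 hμ, (hΦ μ).symm⟩

end Separation

theorem exists_subgradients_of_eventually_le {ι V : Type*} [DecidableEq ι]
    [NormedAddCommGroup V] [InnerProductSpace ℝ V] [CompleteSpace V] {E I : Finset ι}
    (hEI : Disjoint E I) (ρ : ℝ) (g : V) (a : ι → V) (z : ι → ℝ)
    (h : ∀ d, ∀ᶠ t in 𝓝[>] (0 : ℝ),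
      penalty E I z ≤ ρ * ⟪g, t • d⟫ + penalty E I fun i => z i + ⟪a i, t • d⟫) :
    ∃ lam : ι → ℝ, (∀ i ∈ E, lam i ∈ subAbs (z i)) ∧ (∀ i ∈ I, lam i ∈ subPos (z i)) ∧
      ρ • g + ∑ i ∈ E ∪ I, lam i • a i = 0 := by
  have hdir : ∀ d, 0 ≤ ρ * ⟪g, d⟫ + penaltyDir E I z fun i => ⟪a i, d⟫ := by
    intro d
    obtain ⟨t, hle, heq, ht⟩ := ((h d).and
      ((eventually_penalty_add_mul_eq z fun i => ⟪a i, d⟫).and self_mem_nhdsWithin)).exists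
    simp only [real_inner_smul_right] at hle
    rw [heq] at hle
    exact nonneg_of_mul_nonneg_right (by linarith) ht
  let T : ι → Set ℝ := fun i => if i ∈ E then subAbs (z i) else subPos (z i)
  have hsupport : ∀ s : ι → ℝ,
      ∃ μ : ι → ℝ, (∀ i, μ i ∈ T i) ∧ penaltyDir E I z s = ∑ i ∈ E ∪ I, μ i * s i := by
    intro s
    choose μE hμE hE using fun i => exists_mem_subAbs_mul_eq_absDir (z i) (s i)
    choose μI hμI hI using fun i => exists_mem_subPos_mul_eq_posDir (z i) (s i)
    refine ⟨fun i => if i ∈ E then μE i else μI i, fun i => ?_, ?_⟩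
    · dsimp only [T]; split_ifs; exacts [hμE i, hμI i]
    · rw [sum_union hEI, penaltyDir]
      congr 1 <;> refine sum_congr rfl fun i hi => ?_
      · dsimp only; rw [if_pos hi, hE]
      · dsimp only; rw [if_neg (disjoint_right.1 hEI hi), hI]
  obtain ⟨lam, hlam, hsum⟩ := exists_sum_smul_eq_of_forall_inner_le (E ∪ I) a (T := T)
    (fun i => by dsimp only [T]; split_ifs; exacts [isCompact_subAbs _, isCompact_subPos _])
    (fun i => by dsimp only [T]; split_ifs; exacts [convex_subAbs _, convex_subPos _])
    (v := -(ρ • g)) fun w => by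
      obtain ⟨μ, hμ, hD⟩ := hsupport fun i => ⟪a i, w⟫
      refine ⟨μ, hμ, ?_⟩
      have hw := hdir w
      simp only [inner_neg_right, real_inner_smul_right, inner_sum, real_inner_comm w] at hw hD ⊢
      linarith
  refine ⟨lam, fun i hi => ?_, fun i hi => ?_, by rw [hsum, add_neg_cancel]⟩
  · simpa [T, hi] using hlam i
  · simpa [T, disjoint_right.1 hEI hi] using hlam i

theorem eventually_map_smul_le {V : Type*} [AddCommGroup V] [Module ℝ V] {N : V → ℝ}
    (hN : ∀ (t : ℝ) y, N (t • y) = |t| * N y) {δ : ℝ} (hδ : 0 < δ) (d : V) :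
    ∀ᶠ t in 𝓝 (0 : ℝ), N (t • d) ≤ δ := by
  have hlim : Tendsto (fun t : ℝ => |t| * N d) (𝓝 0) (𝓝 0) :=
    (continuous_abs.mul continuous_const).tendsto' 0 0 (by simp)
  filter_upwards [hlim.eventually (gt_mem_nhds hδ)] with t ht
  exact (hN t d).trans_le ht.le

theorem stmt3_general {n : ℕ} {ι : Type*} [DecidableEq ι] (E I : Finset ι) (hEI : Disjoint E I)
    (f : EuclideanSpace ℝ (Fin n) → ℝ) (c : ι → EuclideanSpace ℝ (Fin n) → ℝ)
    (x : EuclideanSpace ℝ (Fin n)) (ρ δ : ℝ) (hρ : 0 < ρ) (hδ : 0 < δ)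
    -- a norm ‖·‖ on ℝⁿ defining the trust region X = {d : ‖d‖ ≤ δ}
    (N : EuclideanSpace ℝ (Fin n) → ℝ)
    (hNsmul : ∀ (t : ℝ) y, N (t • y) = |t| * N y)
    -- the linearized model l(d;ρ,x) = ρ⟨∇f(x),d⟩ + ∑_i v_i(c_i(x)+⟨∇c_i(x),d⟩)
    (l : EuclideanSpace ℝ (Fin n) → ℝ)
    (hl : ∀ d, l d = ρ * inner ℝ (gradient f x) d +
      (∑ i ∈ E, |c i x + inner ℝ (gradient (c i) x) d| +
       ∑ i ∈ I, max (c i x + inner ℝ (gradient (c i) x) d) 0))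
    -- v(x) = 0
    (hvx : ∑ i ∈ E, |c i x| + ∑ i ∈ I, max (c i x) 0 = 0)
    -- d*(ρ,x): a minimizer of l(·;ρ,x) over the trust region
    (dstar : EuclideanSpace ℝ (Fin n))
    (hmin : ∀ d, N d ≤ δ → l dstar ≤ l d)
    -- Δl(d*(ρ,x);ρ,x) = l(0;ρ,x) − l(d*(ρ,x);ρ,x) = 0
    (hΔ : l 0 - l dstar = 0) :
    -- x is a KKT point with multipliers λ_i/ρ for some λ_i ∈ ∂v_i(c_i(x))
    ∃ lam : ι → ℝ,
      (∀ i ∈ E, lam i ∈ subAbs (c i x)) ∧ (∀ i ∈ I, lam i ∈ subPos (c i x)) ∧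
      gradient f x + ∑ i ∈ E ∪ I, (lam i / ρ) • gradient (c i) x = 0 ∧
      (∀ i ∈ E, c i x = 0) ∧ (∀ i ∈ I, c i x ≤ 0) ∧
      (∀ i ∈ I, 0 ≤ lam i / ρ) ∧ (∀ i ∈ I, (lam i / ρ) * c i x = 0) := by
  have hv : penalty E I (fun i => c i x) = 0 := hvx
  have hmodel : ∀ d, l d = ρ * ⟪gradient f x, d⟫ +
      penalty E I fun i => c i x + ⟪gradient (c i) x, d⟫ := hl
  have hl0 : l 0 = 0 := by rw [hmodel]; simpa using hv
  obtain ⟨lam, hlamE, hlamI, hstat⟩ := exists_subgradients_of_eventually_le hEI ρ (gradient f x)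
    (fun i => gradient (c i) x) (fun i => c i x) fun d => by
      filter_upwards [(eventually_map_smul_le hNsmul hδ d).filter_mono nhdsWithin_le_nhds]
        with t ht
      rw [hv, ← hmodel]
      linarith [hmin _ ht]
  obtain ⟨hfeasE, hfeasI⟩ := penalty_eq_zero_iff.1 hv
  refine ⟨lam, hlamE, hlamI, ?_, hfeasE, hfeasI,
    fun i hi => div_nonneg (nonneg_of_mem_subPos (hlamI i hi)) hρ.le, fun i hi => ?_⟩
  · calc gradient f x + ∑ i ∈ E ∪ I, (lam i / ρ) • gradient (c i) x
        = ρ⁻¹ • (ρ • gradient f x + ∑ i ∈ E ∪ I, lam i • gradient (c i) x) := by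
          simp only [smul_add, smul_smul, inv_mul_cancel₀ hρ.ne', one_smul, smul_sum,
            div_eq_inv_mul]
      _ = 0 := by rw [hstat, smul_zero]
  · rw [div_mul_eq_mul_div, mul_eq_zero_of_mem_subPos (hfeasI i hi) (hlamI i hi), zero_div]

theorem stmt3 {n : ℕ} {ι : Type*} [DecidableEq ι] (E I : Finset ι) (hEI : Disjoint E I)
    (f : EuclideanSpace ℝ (Fin n) → ℝ) (c : ι → EuclideanSpace ℝ (Fin n) → ℝ)
    (hf : ContDiff ℝ 1 f) (hc : ∀ i ∈ E ∪ I, ContDiff ℝ 1 (c i))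
    (x : EuclideanSpace ℝ (Fin n)) (ρ δ : ℝ) (hρ : 0 < ρ) (hδ : 0 < δ)
    -- a norm ‖·‖ on ℝⁿ defining the trust region X = {d : ‖d‖ ≤ δ}
    (N : EuclideanSpace ℝ (Fin n) → ℝ)
    (hNadd : ∀ y z, N (y + z) ≤ N y + N z)
    (hNsmul : ∀ (t : ℝ) y, N (t • y) = |t| * N y)
    (hNpos : ∀ y, 0 ≤ N y)
    -- the linearized model l(d;ρ,x) = ρ⟨∇f(x),d⟩ + ∑_i v_i(c_i(x)+⟨∇c_i(x),d⟩)
    (l : EuclideanSpace ℝ (Fin n) → ℝ)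
    (hl : ∀ d, l d = ρ * inner ℝ (gradient f x) d +
      (∑ i ∈ E, |c i x + inner ℝ (gradient (c i) x) d| +
       ∑ i ∈ I, max (c i x + inner ℝ (gradient (c i) x) d) 0))
    -- v(x) = 0
    (hvx : ∑ i ∈ E, |c i x| + ∑ i ∈ I, max (c i x) 0 = 0)
    -- d*(ρ,x): a minimizer of l(·;ρ,x) over the trust region
    (dstar : EuclideanSpace ℝ (Fin n)) (hdX : N dstar ≤ δ)
    (hmin : ∀ d, N d ≤ δ → l dstar ≤ l d)
    -- Δl(d*(ρ,x);ρ,x) = l(0;ρ,x) − l(d*(ρ,x);ρ,x) = 0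
    (hΔ : l 0 - l dstar = 0) :
    -- x is a KKT point with multipliers λ_i/ρ for some λ_i ∈ ∂v_i(c_i(x))
    ∃ lam : ι → ℝ,
      (∀ i ∈ E, lam i ∈ subAbs (c i x)) ∧ (∀ i ∈ I, lam i ∈ subPos (c i x)) ∧
      gradient f x + ∑ i ∈ E ∪ I, (lam i / ρ) • gradient (c i) x = 0 ∧
      (∀ i ∈ E, c i x = 0) ∧ (∀ i ∈ I, c i x ≤ 0) ∧
      (∀ i ∈ I, 0 ≤ lam i / ρ) ∧ (∀ i ∈ I, (lam i / ρ) * c i x = 0) :=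
  stmt3_general E I hEI f c x ρ δ hρ hδ N hNsmul l hl hvx dstar hmin hΔ
end

section
/- Suppose for all k ∈ ℕ, φ-values satisfy the Armijo condition φ(x^k;ρ_k) − φ(x^{k+1};ρ_k) ≥ β_α α_k Δ_k with step size lower bound α_k ≥ c·Δ_k for constants β_α ∈ (0,1), c > 0 and Δ_k := Δl(d^k;ρ_k,x^k) ≥ 0, and {ρ_k} is nonincreasing with f(x^{k+1}) ≥ f̲. Then the shifted penalty function ϕ_k := ρ_k(f(x^k) − f̲) + v(x^k) satisfies ϕ_{k+1} ≤ ϕ_k − cβ_α Δ_k², i.e., it decreases monotonically by at least cβ_α Δ_k² at each step. -/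
theorem stmt11 {n : ℕ} (f v : EuclideanSpace ℝ (Fin n) → ℝ)
    (x : ℕ → EuclideanSpace ℝ (Fin n)) (ρ α Δ : ℕ → ℝ)
    (β_α c fbar : ℝ) (hβα : β_α ∈ Set.Ioo (0 : ℝ) 1) (hc : 0 < c)
    -- v ≥ 0 and f bounded below by f̲ along the iterates
    (hv : ∀ y, 0 ≤ v y) (hf : ∀ k, fbar ≤ f (x k))
    -- {ρ_k} nonincreasing
    (hρmono : ∀ k, ρ (k + 1) ≤ ρ k) (hρpos : ∀ k, 0 < ρ k)
    -- Δ_k := Δl(d^k;ρ_k,x^k) ≥ 0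
    (hΔ : ∀ k, 0 ≤ Δ k)
    -- Armijo condition φ(x^k;ρ_k) − φ(x^{k+1};ρ_k) ≥ β_α α_k Δ_k
    (harmijo : ∀ k, β_α * α k * Δ k ≤
      (ρ k * f (x k) + v (x k)) - (ρ k * f (x (k + 1)) + v (x (k + 1))))
    -- step size lower bound α_k ≥ c·Δ_k
    (hα : ∀ k, c * Δ k ≤ α k) :
    -- ϕ_{k+1} ≤ ϕ_k − cβ_α Δ_k² for ϕ_k = ρ_k(f(x^k) − f̲) + v(x^k)
    ∀ k, ρ (k + 1) * (f (x (k + 1)) - fbar) + v (x (k + 1)) ≤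
      ρ k * (f (x k) - fbar) + v (x k) - c * β_α * Δ k ^ 2 := by
  intro k
  have h1 := harmijo k
  have h2 := hα k
  have h3 := hΔ k
  have h4 : ρ (k+1) * (f (x (k+1)) - fbar) ≤ ρ k * (f (x (k+1)) - fbar) :=
    mul_le_mul_of_nonneg_right (hρmono k) (by linarith [hf (k+1)])
  nlinarith [hβα.1, mul_le_mul_of_nonneg_left (mul_le_mul_of_nonneg_right h2 h3) hβα.1.le]
end

section
/- Suppose the sequence ϕ_k = ρ_k(f(x^k)−f̲) + v(x^k) is monotonically nonincreasing, ρ_k → 0, f(x^k) ≥ f̲, and v ≥ 0 is continuous. Then the set of limit points of {x^k} cannot contain both a point x* with v(x*) = 0 and a point x^× with v(x^×) > 0; i.e., either all limit points are feasible (v = 0) or all are infeasible (v > 0). -/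
open Filter

theorem stmt13 {n : ℕ} (f v : EuclideanSpace ℝ (Fin n) → ℝ)
    (x : ℕ → EuclideanSpace ℝ (Fin n)) (ρ : ℕ → ℝ) (fbar : ℝ)
    (hfcont : Continuous f) (hvcont : Continuous v) (hv : ∀ y, 0 ≤ v y)
    (hf : ∀ k, fbar ≤ f (x k))
    -- f bounded on the sequence
    (hfb : ∃ M, ∀ k, f (x k) ≤ M)
    -- {ρ_k} positive, nonincreasing, converging to 0
    (hρpos : ∀ k, 0 < ρ k) (hρmono : ∀ k, ρ (k + 1) ≤ ρ k)
    (hρ0 : Tendsto ρ atTop (nhds 0))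
    -- ϕ_k = ρ_k(f(x^k) − f̲) + v(x^k) is monotonically nonincreasing
    (hϕ : ∀ k, ρ (k + 1) * (f (x (k + 1)) - fbar) + v (x (k + 1)) ≤
      ρ k * (f (x k) - fbar) + v (x k)) :
    -- limit points cannot be both feasible and infeasible
    ¬ ∃ xstar xcross : EuclideanSpace ℝ (Fin n),
        MapClusterPt xstar atTop x ∧ MapClusterPt xcross atTop x ∧
        v xstar = 0 ∧ 0 < v xcross := by
  rintro ⟨xstar, xcross, hcs, hcc, hvs, hvc⟩
  obtain ⟨M, hM⟩ := hfb
  set ϕ : ℕ → ℝ := fun k => ρ k * (f (x k) - fbar) + v (x k) with hϕdef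
  have hanti : Antitone ϕ := antitone_nat_of_succ_le hϕ
  have hϕ0 : ∀ k, 0 ≤ ϕ k := fun k =>
    add_nonneg (mul_nonneg (hρpos k).le (sub_nonneg.2 (hf k))) (hv _)
  -- ϕ converges to some L
  obtain ⟨L, hL⟩ : ∃ L, Tendsto ϕ atTop (nhds L) :=
    ⟨_, tendsto_atTop_ciInf hanti ⟨0, fun y ⟨k, hk⟩ => hk ▸ hϕ0 k⟩⟩
  -- ρ_k (f(x_k) - fbar) → 0
  have hterm : Tendsto (fun k => ρ k * (f (x k) - fbar)) atTop (nhds 0) := by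
    have hub : Tendsto (fun k => ρ k * (M - fbar)) atTop (nhds 0) := by
      simpa using hρ0.mul_const (M - fbar)
    refine squeeze_zero (fun k => mul_nonneg (hρpos k).le (sub_nonneg.2 (hf k)))
      (fun k => ?_) hub
    exact mul_le_mul_of_nonneg_left (by linarith [hM k]) (hρpos k).le
  -- hence v ∘ x → L
  have hvL : Tendsto (fun k => v (x k)) atTop (nhds L) := by
    have := hL.sub hterm
    simpa [hϕdef] using this
  -- a cluster point of a convergent sequence equals the limit
  have key : ∀ y : EuclideanSpace ℝ (Fin n), MapClusterPt y atTop x → v y = L := by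
    intro y hy
    have hc : MapClusterPt (v y) atTop (v ∘ x) := hy.continuousAt_comp hvcont.continuousAt
    have hne : NeBot (nhds (v y) ⊓ map (v ∘ x) atTop) := hc
    have hle : nhds (v y) ⊓ map (v ∘ x) atTop ≤ nhds (v y) ⊓ nhds L :=
      inf_le_inf_left _ hvL
    exact eq_of_nhds_neBot (hne.mono hle)
  have h1 := key xstar hcs
  have h2 := key xcross hcc
  rw [hvs] at h1
  rw [h2, ← h1] at hvc
  exact lt_irrefl 0 hvc
end

section
/- If the reduction condition Δl(d;ρ,x) + γ ≥ β_φ[l(0;ρ,x) − p(λ;ρ,x) + γ] holds with β_φ ∈ (0,1), then the KKT residuals are bounded: E_opt(x,λ,ρ) := ‖ρ∇f(x)+Σλ_i∇c_i(x)‖_* ≤ (1/(δβ_φ))Δl(d;ρ,x) + ((1−β_φ)/(δβ_φ))γ and E_c(x,λ) ≤ (1/β_φ)Δl(d;ρ,x) + ((1−β_φ)/β_φ)γ. -/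
/-!
Each constraint contributes `v_i(c_i) - c_i λ_i ≥ 0` to the gap between the ℓ₁ violation and
`⟨c, λ⟩`, and splitting by the sign of `c_i` shows that these contributions add up to `E_c`.
Hence `l(0) - p(λ) = δ E_opt + E_c` is a sum of two nonnegative terms, and the reduction
condition bounds each of them separately.
-/

open Finset

theorem abs_sub_mul_eq_ite (c t : ℝ) :
    |c| - c * t = (if 0 < c then (1 - t) * |c| else 0) + (if c < 0 then (1 + t) * |c| else 0) := by
  rcases lt_trichotomy c 0 with h | rfl | h
  · rw [if_neg h.not_gt, if_pos h, abs_of_neg h]; ring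
  · simp
  · rw [if_pos h, if_neg h.not_gt, abs_of_pos h]; ring

theorem max_zero_sub_mul_eq_ite (c t : ℝ) :
    max c 0 - c * t = (if 0 < c then (1 - t) * max c 0 else 0) + (if c < 0 then t * |c| else 0) := by
  rcases lt_trichotomy c 0 with h | rfl | h
  · rw [if_neg h.not_gt, if_pos h, abs_of_neg h, max_eq_right h.le]; ring
  · simp
  · rw [if_pos h, if_neg h.not_gt, max_eq_left h.le]; ring

theorem mul_le_abs_of_mem_Icc {c t : ℝ} (ht : t ∈ Set.Icc (-1 : ℝ) 1) : c * t ≤ |c| :=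
  calc c * t ≤ |c * t| := le_abs_self _
    _ = |c| * |t| := abs_mul c t
    _ ≤ |c| * 1 := mul_le_mul_of_nonneg_left (abs_le.mpr ht) (abs_nonneg c)
    _ = |c| := mul_one _

theorem mul_le_max_zero_of_mem_Icc {c t : ℝ} (ht : t ∈ Set.Icc (0 : ℝ) 1) : c * t ≤ max c 0 := by
  rcases le_total 0 c with h | h
  · rw [max_eq_left h]; exact mul_le_of_le_one_right h ht.2
  · rw [max_eq_right h]; exact mul_nonpos_of_nonpos_of_nonneg h ht.1

section Complementarity

variable {ι : Type*} [DecidableEq ι] {E I : Finset ι} (c lam : ι → ℝ)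

theorem violation_sub_sum_mul_eq_complementarity (hEI : Disjoint E I) :
    ∑ i ∈ E, |c i| + ∑ i ∈ I, max (c i) 0 - ∑ i ∈ E ∪ I, c i * lam i =
      ∑ i ∈ (E ∪ I).filter (fun i => 0 < c i),
          (1 - lam i) * (if i ∈ E then |c i| else max (c i) 0) +
        (∑ i ∈ E.filter (fun i => c i < 0), (1 + lam i) * |c i| +
          ∑ i ∈ I.filter (fun i => c i < 0), lam i * |c i|) := by
  have hE : ∑ i ∈ E, (|c i| - c i * lam i) =
      ∑ i ∈ E, ((if 0 < c i then (1 - lam i) * (if i ∈ E then |c i| else max (c i) 0) else 0) +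
        (if c i < 0 then (1 + lam i) * |c i| else 0)) :=
    sum_congr rfl fun i hi => by rw [if_pos hi]; exact abs_sub_mul_eq_ite _ _
  have hI : ∑ i ∈ I, (max (c i) 0 - c i * lam i) =
      ∑ i ∈ I, ((if 0 < c i then (1 - lam i) * (if i ∈ E then |c i| else max (c i) 0) else 0) +
        (if c i < 0 then lam i * |c i| else 0)) :=
    sum_congr rfl fun i hi => by
      rw [if_neg (disjoint_right.mp hEI hi)]; exact max_zero_sub_mul_eq_ite _ _
  rw [sum_sub_distrib, sum_add_distrib] at hE hI
  rw [sum_filter, sum_filter, sum_filter, sum_union hEI, sum_union hEI]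
  linarith

variable {c lam} in
theorem sum_mul_le_violation (hEI : Disjoint E I)
    (hlamE : ∀ i ∈ E, lam i ∈ Set.Icc (-1 : ℝ) 1) (hlamI : ∀ i ∈ I, lam i ∈ Set.Icc (0 : ℝ) 1) :
    ∑ i ∈ E ∪ I, c i * lam i ≤ ∑ i ∈ E, |c i| + ∑ i ∈ I, max (c i) 0 := by
  rw [sum_union hEI]
  exact add_le_add (sum_le_sum fun i hi => mul_le_abs_of_mem_Icc (hlamE i hi))
    (sum_le_sum fun i hi => mul_le_max_zero_of_mem_Icc (hlamI i hi))

end Complementarity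

theorem le_of_mul_add_add_le {β a b Δ γ : ℝ} (hβ : 0 < β) (hb : 0 ≤ b)
    (h : β * (a + b + γ) ≤ Δ + γ) : a ≤ 1 / β * Δ + (1 - β) / β * γ := by
  rw [div_mul_eq_mul_div, div_mul_eq_mul_div, ← add_div, le_div_iff₀ hβ]
  nlinarith [mul_nonneg hβ.le hb]

theorem stmt14_general {n : ℕ} {ι : Type*} [DecidableEq ι] (E I : Finset ι) (hEI : Disjoint E I)
    -- ∇f(x), ∇c_i(x), and the values c_i = c_i(x)
    (gf : EuclideanSpace ℝ (Fin n)) (gc : ι → EuclideanSpace ℝ (Fin n)) (c : ι → ℝ)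
    (ρ δ γ β_φ : ℝ) (hδ : 0 < δ)
    (hβφ : β_φ ∈ Set.Ioo (0 : ℝ) 1)
    -- the dual norm ‖·‖_*
    (Nd : EuclideanSpace ℝ (Fin n) → ℝ) (hNdpos : ∀ u, 0 ≤ Nd u)
    -- dual feasible λ
    (lam : ι → ℝ)
    (hlamE : ∀ i ∈ E, lam i ∈ Set.Icc (-1 : ℝ) 1)
    (hlamI : ∀ i ∈ I, lam i ∈ Set.Icc (0 : ℝ) 1)
    -- E_opt(x,λ,ρ) = ‖ρ∇f(x)+∑λ_i∇c_i(x)‖_*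
    (Eopt : ℝ) (hEopt : Eopt = Nd (ρ • gf + ∑ i ∈ E ∪ I, lam i • gc i))
    -- the complementarity residual E_c(x,λ)
    (Ec : ℝ) (hEc : Ec = ∑ i ∈ (E ∪ I).filter (fun i => 0 < c i),
        (1 - lam i) * (if i ∈ E then |c i| else max (c i) 0) +
      (∑ i ∈ E.filter (fun i => c i < 0), (1 + lam i) * |c i| +
       ∑ i ∈ I.filter (fun i => c i < 0), lam i * |c i|))
    -- l(0;ρ,x) = v(x) and p(λ;ρ,x) = −δE_opt + ⟨c(x),λ⟩
    (l0 p : ℝ) (hl0 : l0 = ∑ i ∈ E, |c i| + ∑ i ∈ I, max (c i) 0)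
    (hp : p = -δ * Eopt + ∑ i ∈ E ∪ I, c i * lam i)
    -- Δl(d;ρ,x) ≥ 0 and the reduction condition Δl + γ ≥ β_φ[l(0;ρ,x) − p(λ;ρ,x) + γ]
    (Δ : ℝ) (hred : β_φ * (l0 - p + γ) ≤ Δ + γ) :
    Eopt ≤ 1 / (δ * β_φ) * Δ + (1 - β_φ) / (δ * β_φ) * γ ∧
    Ec ≤ 1 / β_φ * Δ + (1 - β_φ) / β_φ * γ := by
  have hβ : 0 < β_φ := hβφ.1
  have hEopt_nonneg : 0 ≤ Eopt := hEopt ▸ hNdpos _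
  have hEc_eq : Ec = l0 - ∑ i ∈ E ∪ I, c i * lam i := by
    rw [hEc, hl0, violation_sub_sum_mul_eq_complementarity c lam hEI]
  have hEc_nonneg : 0 ≤ Ec := by
    rw [hEc_eq, hl0, sub_nonneg]; exact sum_mul_le_violation hEI hlamE hlamI
  have hgap : l0 - p = δ * Eopt + Ec := by rw [hp, hEc_eq]; ring
  rw [hgap] at hred
  have hδEopt : δ * Eopt ≤ 1 / β_φ * Δ + (1 - β_φ) / β_φ * γ :=
    le_of_mul_add_add_le hβ hEc_nonneg hred
  refine ⟨?_, le_of_mul_add_add_le hβ (mul_nonneg hδ.le hEopt_nonneg) (by linarith)⟩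
  rw [show 1 / (δ * β_φ) * Δ + (1 - β_φ) / (δ * β_φ) * γ =
      (1 / β_φ * Δ + (1 - β_φ) / β_φ * γ) / δ by field_simp, le_div_iff₀ hδ]
  linarith

theorem stmt14 {n : ℕ} {ι : Type*} [DecidableEq ι] (E I : Finset ι) (hEI : Disjoint E I)
    -- ∇f(x), ∇c_i(x), and the values c_i = c_i(x)
    (gf : EuclideanSpace ℝ (Fin n)) (gc : ι → EuclideanSpace ℝ (Fin n)) (c : ι → ℝ)
    (ρ δ γ β_φ : ℝ) (hρ : 0 ≤ ρ) (hδ : 0 < δ) (hγ : 0 < γ)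
    (hβφ : β_φ ∈ Set.Ioo (0 : ℝ) 1)
    -- the dual norm ‖·‖_*
    (Nd : EuclideanSpace ℝ (Fin n) → ℝ) (hNdpos : ∀ u, 0 ≤ Nd u)
    -- dual feasible λ
    (lam : ι → ℝ)
    (hlamE : ∀ i ∈ E, lam i ∈ Set.Icc (-1 : ℝ) 1)
    (hlamI : ∀ i ∈ I, lam i ∈ Set.Icc (0 : ℝ) 1)
    -- E_opt(x,λ,ρ) = ‖ρ∇f(x)+∑λ_i∇c_i(x)‖_*
    (Eopt : ℝ) (hEopt : Eopt = Nd (ρ • gf + ∑ i ∈ E ∪ I, lam i • gc i))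
    -- the complementarity residual E_c(x,λ)
    (Ec : ℝ) (hEc : Ec = ∑ i ∈ (E ∪ I).filter (fun i => 0 < c i),
        (1 - lam i) * (if i ∈ E then |c i| else max (c i) 0) +
      (∑ i ∈ E.filter (fun i => c i < 0), (1 + lam i) * |c i| +
       ∑ i ∈ I.filter (fun i => c i < 0), lam i * |c i|))
    -- l(0;ρ,x) = v(x) and p(λ;ρ,x) = −δE_opt + ⟨c(x),λ⟩
    (l0 p : ℝ) (hl0 : l0 = ∑ i ∈ E, |c i| + ∑ i ∈ I, max (c i) 0)
    (hp : p = -δ * Eopt + ∑ i ∈ E ∪ I, c i * lam i)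
    -- Δl(d;ρ,x) ≥ 0 and the reduction condition Δl + γ ≥ β_φ[l(0;ρ,x) − p(λ;ρ,x) + γ]
    (Δ : ℝ) (hΔ : 0 ≤ Δ) (hred : β_φ * (l0 - p + γ) ≤ Δ + γ) :
    Eopt ≤ 1 / (δ * β_φ) * Δ + (1 - β_φ) / (δ * β_φ) * γ ∧
    Ec ≤ 1 / β_φ * Δ + (1 - β_φ) / β_φ * γ :=
  stmt14_general E I hEI gf gc c ρ δ γ β_φ hδ hβφ Nd hNdpos lam hlamE hlamI Eopt hEopt Ec hEc l0 p
    hl0 hp Δ hred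
end

section
/- Suppose λ satisfies −1+τ ≤ λ_i ≤ 1−τ for i∈E, 0 < λ_i ≤ 1−τ for i in the active set A, and 0 ≤ λ_i ≤ τ with c_i ≤ 0 for i in the inactive set N, where 0 < τ < 1. Then v − Σ_i λ_i c_i ≥ τ·v, where v = Σ_{i∈E}|c_i| + Σ_{i∈A∪N}(c_i)₊. Consequently v ≤ E_c(λ)/τ where E_c(λ) = v − Σ_i λ_i c_i. -/
open Finset

theorem stmt16 {ι : Type*} [DecidableEq ι] (E A N : Finset ι)
    (hEA : Disjoint E A) (hEN : Disjoint E N) (hAN : Disjoint A N)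
    (c lam : ι → ℝ) (τ : ℝ) (hτ : τ ∈ Set.Ioo (0 : ℝ) 1)
    -- −1+τ ≤ λ_i ≤ 1−τ for i∈E
    (hE : ∀ i ∈ E, -1 + τ ≤ lam i ∧ lam i ≤ 1 - τ)
    -- 0 < λ_i ≤ 1−τ for i in the active set A
    (hA : ∀ i ∈ A, 0 < lam i ∧ lam i ≤ 1 - τ)
    -- 0 ≤ λ_i ≤ τ and c_i ≤ 0 for i in the inactive set N
    (hN : ∀ i ∈ N, 0 ≤ lam i ∧ lam i ≤ τ ∧ c i ≤ 0)
    -- v = ∑_{i∈E}|c_i| + ∑_{i∈A∪N}(c_i)₊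
    (v : ℝ) (hv : v = ∑ i ∈ E, |c i| + ∑ i ∈ A ∪ N, max (c i) 0) :
    τ * v ≤ v - ∑ i ∈ E ∪ A ∪ N, lam i * c i ∧
    v ≤ (v - ∑ i ∈ E ∪ A ∪ N, lam i * c i) / τ := by
  obtain ⟨hτ0, hτ1⟩ := hτ
  have hdisj : Disjoint (E ∪ A) N := Finset.disjoint_union_left.mpr ⟨hEN, hAN⟩
  have key : ∑ i ∈ E ∪ A ∪ N, lam i * c i ≤ (1 - τ) * v := by
    rw [Finset.sum_union hdisj, Finset.sum_union hEA, hv,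
      Finset.sum_union hAN, mul_add, mul_add, Finset.mul_sum, Finset.mul_sum,
      Finset.mul_sum, ← add_assoc]
    refine add_le_add (add_le_add (Finset.sum_le_sum ?_) (Finset.sum_le_sum ?_))
      (Finset.sum_le_sum ?_)
    · intro i hi
      obtain ⟨h1, h2⟩ := hE i hi
      calc lam i * c i ≤ |lam i * c i| := le_abs_self _
        _ = |lam i| * |c i| := abs_mul _ _
        _ ≤ (1 - τ) * |c i| := by
            apply mul_le_mul_of_nonneg_right _ (abs_nonneg _)
            rw [abs_le]; constructor <;> linarith
    · intro i hi
      obtain ⟨h1, h2⟩ := hA i hi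
      rcases le_or_gt 0 (c i) with h | h
      · rw [max_eq_left h]
        exact mul_le_mul_of_nonneg_right h2 h
      · rw [max_eq_right h.le]
        nlinarith
    · intro i hi
      obtain ⟨h1, h2, h3⟩ := hN i hi
      rw [max_eq_right h3]
      nlinarith
  have h1 : τ * v ≤ v - ∑ i ∈ E ∪ A ∪ N, lam i * c i := by linarith
  exact ⟨h1, (le_div_iff₀ hτ0).mpr (by linarith [mul_comm τ v])⟩
end
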